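/- arXiv:1011.2271 — 3 statements merged into one kernel-verified Lean document; each statement's English description precedes it below -/
import Mathlib

section
/- Let A be a unital associative algebra over a ring R with basis {e, C₁, C₂, p, et, ...} modelling QH of a 2-torus, where C₁·C₂ = p + a' e t, C₂·C₁ = −p + a'' e t, C₁·C₁ = ½ a₁₁ e t, C₂·C₂ = ½ a₂₂ e t, and the product is associative. Then p·p = σ p t + τ e t² with σ = a'' − a' and τ = a'a'' − ¼ a₁₁ a₂₂, and hence σ² + 4τ = (a' + a'')² − a₁₁ a₂₂ = a₁₂² − a₁₁a₂₂ where a₁₂ = a' + a''. -/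
open Polynomial

/-- In an associative unital algebra over `R[t]` (`R` a commutative `ℚ`-algebra)
modelling the quantum homology of a 2-torus, with relations
`C₁·C₂ = p + a'·1·t`, `C₂·C₁ = −p + a''·1·t`, `C₁·C₁ = ½a₁₁·1·t`,
`C₂·C₂ = ½a₂₂·1·t`, one has `p·p = σ p t + τ·1·t²` with `σ = a'' − a'` and
`τ = a'a'' − ¼a₁₁a₂₂`, and `σ² + 4τ = (a' + a'')² − a₁₁a₂₂ = a₁₂² − a₁₁a₂₂`
where `a₁₂ = a' + a''`. -/
theorem stmt_3 {R : Type*} [CommRing R] [Algebra ℚ R]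
    {A : Type*} [Ring A] [Algebra (Polynomial R) A]
    (C₁ C₂ p : A) (a' a'' a₁₁ a₂₂ : R)
    (h12 : C₁ * C₂ = p + (C a' * X) • (1 : A))
    (h21 : C₂ * C₁ = -p + (C a'' * X) • (1 : A))
    (h11 : C₁ * C₁ = (C (algebraMap ℚ R (1/2) * a₁₁) * X) • (1 : A))
    (h22 : C₂ * C₂ = (C (algebraMap ℚ R (1/2) * a₂₂) * X) • (1 : A))
    (σ τ a₁₂ : R) (hσ : σ = a'' - a') (hτ : τ = a' * a'' - algebraMap ℚ R (1/4) * (a₁₁ * a₂₂))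
    (ha₁₂ : a₁₂ = a' + a'') :
    p * p = (C σ * X) • p + (C τ * X ^ 2) • (1 : A) ∧
      σ ^ 2 + 4 * τ = (a' + a'') ^ 2 - a₁₁ * a₂₂ ∧
      σ ^ 2 + 4 * τ = a₁₂ ^ 2 - a₁₁ * a₂₂ := by
  have hk : algebraMap ℚ R (1/2) * algebraMap ℚ R (1/2) = algebraMap ℚ R (1/4) := by
    rw [← map_mul]; norm_num
  have h4 : (4 : R) * algebraMap ℚ R (1/4) = 1 := by
    rw [show (4 : R) = algebraMap ℚ R 4 from (map_ofNat (algebraMap ℚ R) 4).symm,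
      ← map_mul]; norm_num
  refine ⟨?_, ?_, ?_⟩
  · have hp1 : p = C₁ * C₂ - (C a' * X) • (1 : A) := by rw [h12]; abel
    have hp2 : p = -(C₂ * C₁) + (C a'' * X) • (1 : A) := by rw [h21]; abel
    have hquad : C₁ * C₂ * (C₂ * C₁)
        = ((C (algebraMap ℚ R (1/2) * a₂₂) * X) * (C (algebraMap ℚ R (1/2) * a₁₁) * X)) • (1 : A) := by
      have h : C₁ * C₂ * (C₂ * C₁) = C₁ * (C₂ * C₂) * C₁ := by noncomm_ring
      rw [h, h22, mul_smul_comm, mul_one, smul_mul_assoc, h11, smul_smul]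
    calc p * p = (C₁ * C₂ - (C a' * X) • (1 : A)) * (-(C₂ * C₁) + (C a'' * X) • (1 : A)) := by
          rw [← hp1, ← hp2]
      _ = (C σ * X) • p + (C τ * X ^ 2) • (1 : A) := by
          simp only [sub_mul, mul_add, mul_neg, neg_mul, smul_mul_assoc, mul_smul_comm,
            one_mul, mul_one, smul_neg, neg_neg, smul_smul]
          rw [hquad, h12, h21]
          simp only [smul_add, smul_neg, smul_smul, neg_add]
          have hτ' : τ = a' * a''
              - (algebraMap ℚ R (1/2) * a₂₂) * (algebraMap ℚ R (1/2) * a₁₁) := by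
            rw [hτ, ← hk]; ring
          match_scalars
          all_goals first
            | (rw [hσ, C_sub]; ring)
            | (rw [hτ', C_sub]; simp only [C_mul, C_pow, map_pow]; ring)
  · rw [hσ, hτ]; linear_combination -(a₁₁ * a₂₂) * h4
  · rw [ha₁₂, hσ, hτ]; linear_combination -(a₁₁ * a₂₂) * h4
end

section
/- For the Clifford torus in ℂPⁿ, the superpotential 𝒫(z₁,…,zₙ) = z₁ + ⋯ + zₙ + 1/(z₁⋯zₙ) on (ℂ*)ⁿ has exactly n+1 critical points, namely the points (z,…,z) with z^{n+1} = 1, and each critical point is nondegenerate (the holomorphic Hessian is invertible there). -/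
/-!
Since `∂ᵢ𝒫 = 1 - (zᵢ · ∏ z)⁻¹`, a critical point has every coordinate equal to `c = (∏ z)⁻¹`,
and then `∏ z = cⁿ` forces `c ^ (n + 1) = 1`. The Hessian has entries
`(1 + δᵢⱼ) / (zᵢ zⱼ ∏ z)`, i.e. it is `(∏ z)⁻¹ · D (I + 𝟙𝟙ᵀ) D` with `D = diag (z⁻¹)`; by the
matrix determinant lemma `det (I + 𝟙𝟙ᵀ) = n + 1`, so the Hessian is invertible at every point of
`(ℂ*)ⁿ`, critical or not.
-/

/-- The Clifford-torus superpotential `𝒫(z) = z₁ + ⋯ + zₙ + 1/(z₁⋯zₙ)`. -/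
noncomputable def cliffordPotential (n : ℕ) : (Fin n → ℂ) → ℂ :=
  fun z => (∑ i, z i) + (∏ i, z i)⁻¹

/-- The `i`-th partial derivative of a function of `n` complex variables. -/
noncomputable def partialDeriv (n : ℕ) (f : (Fin n → ℂ) → ℂ) (i : Fin n)
    (z : Fin n → ℂ) : ℂ :=
  deriv (fun w => f (Function.update z i w)) (z i)

/-- The holomorphic Hessian matrix of a function of `n` complex variables. -/
noncomputable def hessian (n : ℕ) (f : (Fin n → ℂ) → ℂ) (z : Fin n → ℂ) :
    Matrix (Fin n) (Fin n) ℂ :=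
  Matrix.of fun i j => partialDeriv n (partialDeriv n f j) i z

open Finset Function Matrix

theorem Matrix.det_one_add_vecMulVec {m α : Type*} [Fintype m] [DecidableEq m] [CommRing α]
    (u v : m → α) : det (1 + vecMulVec u v) = 1 + v ⬝ᵥ u := by
  rw [vecMulVec_eq Unit, det_one_add_replicateCol_mul_replicateRow]

theorem prod_update_eq_mul_prod_erase {ι M : Type*} [Fintype ι] [DecidableEq ι] [CommMonoid M]
    (z : ι → M) (i : ι) (w : M) : ∏ k, update z i w k = w * ∏ k ∈ univ.erase i, z k := by
  rw [prod_update_of_mem (mem_univ i), erase_eq]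

theorem partialDeriv_cliffordPotential {n : ℕ} {z : Fin n → ℂ} (hz : ∀ i, z i ≠ 0) (i : Fin n) :
    partialDeriv n (cliffordPotential n) i z = 1 - (z i * ∏ k, z k)⁻¹ := by
  set Q := ∏ k ∈ univ.erase i, z k
  have hQ : Q ≠ 0 := prod_ne_zero_iff.2 fun k _ => hz k
  have hprod : ∏ k, z k = z i * Q := (mul_prod_erase univ z (mem_univ i)).symm
  have hfun : (fun w => cliffordPotential n (update z i w))
      = fun w => (w + ∑ k ∈ univ \ {i}, z k) + Q⁻¹ * w⁻¹ := by
    funext w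
    rw [cliffordPotential, sum_update_of_mem (mem_univ i), prod_update_eq_mul_prod_erase,
      mul_inv, mul_comm]
  have hderiv : HasDerivAt (fun w => (w + ∑ k ∈ univ \ {i}, z k) + Q⁻¹ * w⁻¹)
      (1 + Q⁻¹ * -(z i ^ 2)⁻¹) (z i) :=
    ((hasDerivAt_id' (z i)).add_const _).add ((hasDerivAt_inv (hz i)).const_mul Q⁻¹)
  rw [partialDeriv, hfun, hderiv.deriv, hprod]
  field_simp
  ring

theorem partialDeriv_partialDeriv_cliffordPotential {n : ℕ} {z : Fin n → ℂ}
    (hz : ∀ i, z i ≠ 0) (i j : Fin n) :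
    partialDeriv n (partialDeriv n (cliffordPotential n) j) i z
      = (1 + if i = j then 1 else 0) * (z i * z j * ∏ k, z k)⁻¹ := by
  set Q := ∏ k ∈ univ.erase i, z k
  have hQ : Q ≠ 0 := prod_ne_zero_iff.2 fun k _ => hz k
  have hprod : ∏ k, z k = z i * Q := (mul_prod_erase univ z (mem_univ i)).symm
  have hlocal : (fun w => partialDeriv n (cliffordPotential n) j (update z i w))
      =ᶠ[nhds (z i)] fun w => 1 - (update z i w j * (w * Q))⁻¹ := by
    filter_upwards [isOpen_ne.mem_nhds (hz i)] with w hw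
    have hzw : ∀ k, update z i w k ≠ 0 := by
      intro k
      rcases eq_or_ne k i with rfl | hk
      · simpa using hw
      · simpa [update_of_ne hk] using hz k
    rw [partialDeriv_cliffordPotential hzw, prod_update_eq_mul_prod_erase]
  have hderiv : HasDerivAt (fun w => 1 - (update z i w j * (w * Q))⁻¹) _ (z i) :=
    (hasDerivAt_const (z i) (1 : ℂ)).sub
    (((hasDerivAt_pi.1 (hasDerivAt_update z i (z i)) j).mul
      ((hasDerivAt_id' (z i)).mul_const Q)).inv
      (by simpa using mul_ne_zero (hz j) (mul_ne_zero (hz i) hQ)))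
  rw [partialDeriv, hlocal.deriv_eq, hderiv.deriv, update_eq_self, hprod]
  simp only [Pi.mul_apply, zero_sub, neg_div, neg_neg]
  rcases eq_or_ne i j with rfl | hij
  · rw [Pi.single_eq_same, update_self, if_pos rfl]
    field_simp
  · rw [Pi.single_eq_of_ne hij.symm, update_of_ne hij.symm, if_neg hij, zero_mul,
      zero_add, add_zero]
    field_simp

theorem hessian_cliffordPotential {n : ℕ} {z : Fin n → ℂ} (hz : ∀ i, z i ≠ 0) :
    hessian n (cliffordPotential n) z
      = (∏ k, z k)⁻¹ • (diagonal z⁻¹ * (1 + vecMulVec 1 1) * diagonal z⁻¹) := by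
  ext i j
  rw [hessian, of_apply, partialDeriv_partialDeriv_cliffordPotential hz, Matrix.smul_apply,
    mul_diagonal, diagonal_mul, Matrix.add_apply, one_apply, vecMulVec_apply]
  simp only [Pi.inv_apply, Pi.one_apply, mul_one, smul_eq_mul, mul_inv]
  ring

theorem isUnit_det_hessian_cliffordPotential {n : ℕ} {z : Fin n → ℂ} (hz : ∀ i, z i ≠ 0) :
    IsUnit (hessian n (cliffordPotential n) z).det := by
  have hprod : ∏ k, z k ≠ 0 := prod_ne_zero_iff.2 fun k _ => hz k
  rw [hessian_cliffordPotential hz, det_smul, det_mul, det_mul, det_one_add_vecMulVec,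
    det_diagonal, isUnit_iff_ne_zero]
  have hn : (1 + (1 : Fin n → ℂ) ⬝ᵥ 1) ≠ 0 := by
    simp only [dotProduct_one, Pi.one_apply, sum_const, card_univ, Fintype.card_fin, nsmul_one]
    exact_mod_cast (by omega : 1 + n ≠ 0)
  simp only [Pi.inv_apply, prod_inv_distrib]
  positivity

theorem partialDeriv_cliffordPotential_eq_zero_iff {n : ℕ} {z : Fin n → ℂ} (hz : ∀ i, z i ≠ 0)
    (i : Fin n) : partialDeriv n (cliffordPotential n) i z = 0 ↔ z i * ∏ k, z k = 1 := by
  rw [partialDeriv_cliffordPotential hz, sub_eq_zero, eq_comm, inv_eq_one]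

theorem isCritical_cliffordPotential_iff {n : ℕ} {z : Fin n → ℂ} (hz : ∀ i, z i ≠ 0) :
    (∀ i, partialDeriv n (cliffordPotential n) i z = 0) ↔
      ∃ c : ℂ, c ^ (n + 1) = 1 ∧ ∀ i, z i = c := by
  simp only [partialDeriv_cliffordPotential_eq_zero_iff hz]
  constructor
  · intro h
    have hprod : ∏ k, z k ≠ 0 := prod_ne_zero_iff.2 fun k _ => hz k
    have hzc : ∀ i, z i = (∏ k, z k)⁻¹ := fun i => eq_inv_of_mul_eq_one_left (h i)
    refine ⟨(∏ k, z k)⁻¹, ?_, hzc⟩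
    rw [pow_succ, ← Fin.prod_const, ← prod_congr rfl fun i _ => hzc i, mul_inv_cancel₀ hprod]
  · rintro ⟨c, hc, hzc⟩ i
    rw [prod_congr rfl fun k _ => hzc k, Fin.prod_const, hzc i, ← pow_succ', hc]

theorem ncard_setOf_pow_eq_one {m : ℕ} (hm : 0 < m) : {c : ℂ | c ^ m = 1}.ncard = m := by
  have hroots : {c : ℂ | c ^ m = 1} = ↑(Polynomial.nthRootsFinset m (1 : ℂ)) :=
    Set.ext fun _ => (Polynomial.mem_nthRootsFinset hm 1).symm
  rw [hroots, Set.ncard_coe_finset, (Complex.isPrimitiveRoot_exp m hm.ne').card_nthRootsFinset]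

theorem ncard_critical_cliffordPotential (n : ℕ) :
    {z : Fin n → ℂ | (∀ i, z i ≠ 0) ∧ ∀ i, partialDeriv n (cliffordPotential n) i z = 0}.ncard
      = n + 1 := by
  have hcrit : {z : Fin n → ℂ | (∀ i, z i ≠ 0) ∧ ∀ i, partialDeriv n (cliffordPotential n) i z = 0}
      = (fun c _ => c) '' {c : ℂ | c ^ (n + 1) = 1} := by
    ext z
    constructor
    · rintro ⟨hz, hzcrit⟩
      obtain ⟨c, hc, hzc⟩ := (isCritical_cliffordPotential_iff hz).1 hzcrit
      exact ⟨c, hc, (funext hzc).symm⟩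
    · rintro ⟨c, hc, rfl⟩
      have hc0 : c ≠ 0 := by rintro rfl; simp at hc
      exact ⟨fun _ => hc0, (isCritical_cliffordPotential_iff fun _ => hc0).2 ⟨c, hc, fun _ => rfl⟩⟩
  -- for `n = 0` no coordinate remembers `c`; it is recovered as `c ^ (n + 1) / c ^ n`
  have hinj : Set.InjOn (fun (c : ℂ) (_ : Fin n) => c) {c | c ^ (n + 1) = 1} := by
    intro a ha b hb hab
    have hpow : a ^ n = b ^ n := by
      simpa only [Fin.prod_const] using congrArg (fun z : Fin n → ℂ => ∏ k, z k) hab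
    have hpow0 : a ^ n ≠ 0 := by
      rintro h; simp [pow_succ, h] at ha
    rw [Set.mem_ofPred_eq, pow_succ] at ha hb
    exact mul_left_cancel₀ hpow0 (by rw [ha, ← hb, hpow])
  rw [hcrit, hinj.ncard_image, ncard_setOf_pow_eq_one n.succ_pos]

theorem stmt_4_general (n : ℕ) :
    (∀ z : Fin n → ℂ, (∀ i, z i ≠ 0) →
        ((∀ i, partialDeriv n (cliffordPotential n) i z = 0) ↔
          ∃ c : ℂ, c ^ (n + 1) = 1 ∧ ∀ i, z i = c)) ∧
    (∀ z : Fin n → ℂ, (∀ i, z i ≠ 0) →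
        (∀ i, partialDeriv n (cliffordPotential n) i z = 0) →
        IsUnit (hessian n (cliffordPotential n) z).det) ∧
    Set.ncard {z : Fin n → ℂ |
        (∀ i, z i ≠ 0) ∧ ∀ i, partialDeriv n (cliffordPotential n) i z = 0} =
      n + 1 :=
  ⟨fun _ hz => isCritical_cliffordPotential_iff hz,
    fun _ hz _ => isUnit_det_hessian_cliffordPotential hz,
    ncard_critical_cliffordPotential n⟩

/-- The superpotential `𝒫(z₁,…,zₙ) = z₁ + ⋯ + zₙ + 1/(z₁⋯zₙ)` of the Clifford
torus in `ℂPⁿ` has exactly the `n+1` critical points `(z,…,z)` with `z^(n+1) = 1`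
in `(ℂ*)ⁿ`, and each of them is nondegenerate. -/
theorem stmt_4 (n : ℕ) (hn : 1 ≤ n) :
    (∀ z : Fin n → ℂ, (∀ i, z i ≠ 0) →
        ((∀ i, partialDeriv n (cliffordPotential n) i z = 0) ↔
          ∃ c : ℂ, c ^ (n + 1) = 1 ∧ ∀ i, z i = c)) ∧
    (∀ z : Fin n → ℂ, (∀ i, z i ≠ 0) →
        (∀ i, partialDeriv n (cliffordPotential n) i z = 0) →
        IsUnit (hessian n (cliffordPotential n) z).det) ∧
    Set.ncard {z : Fin n → ℂ |
        (∀ i, z i ≠ 0) ∧ ∀ i, partialDeriv n (cliffordPotential n) i z = 0} =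
      n + 1 :=
  stmt_4_general n
end

section
/- A finite-dimensional commutative Frobenius algebra (𝒜, F) over an algebraically closed field of characteristic 0 is semi-simple (isomorphic to a finite product of copies of the field) if and only if its Euler class ℰ(𝒜,F) is invertible in 𝒜. -/
/-!
The Euler class `E = ∑ bᵢ bᵢ^∨` represents the trace, `tr x = F (x E)`: the diagonal coefficient
of `x bᵢ` is `F (x bᵢ bᵢ^∨)`. As `F` is nondegenerate, `E` is a unit exactly when the trace form
`(x, y) ↦ tr (x y)` is nondegenerate. On `kᵐ` the trace form is the dot product. Conversely, a
nondegenerate trace form makes the algebra reduced, since nilpotent elements have trace zero, and a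
reduced finite-dimensional algebra over an algebraically closed field is a product of copies of it.
-/

open Algebra

section Frobenius

variable {k 𝒜 : Type*} [CommRing k] [CommRing 𝒜] [Algebra k 𝒜] {F : 𝒜 →ₗ[k] k}
  {ι : Type*} [Fintype ι] [DecidableEq ι] {b : Module.Basis ι k 𝒜} {bd : ι → 𝒜}

theorem Module.Basis.repr_apply_eq_apply_mul_of_dual
    (hbd : ∀ i j, F (b i * bd j) = if i = j then 1 else 0) (a : 𝒜) (j : ι) :
    b.repr a j = F (a * bd j) := by
  conv_rhs => rw [← b.sum_repr a]
  simp only [Finset.sum_mul, smul_mul_assoc, map_sum, map_smul, hbd, smul_eq_mul, mul_ite,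
    mul_one, mul_zero, Finset.sum_ite_eq', Finset.mem_univ, if_true]

theorem Algebra.trace_eq_apply_mul_sum_mul_dual
    (hbd : ∀ i j, F (b i * bd j) = if i = j then 1 else 0) (x : 𝒜) :
    trace k 𝒜 x = F (x * ∑ i, b i * bd i) := by
  simp only [trace_eq_matrix_trace b, Matrix.trace, Matrix.diag_apply,
    leftMulMatrix_eq_repr_mul, b.repr_apply_eq_apply_mul_of_dual hbd, Finset.mul_sum, map_sum,
    mul_assoc]

end Frobenius

theorem isUnit_sum_mul_dual_iff_traceForm_separatingLeft {k 𝒜 : Type*} [Field k] [CommRing 𝒜]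
    [Algebra k 𝒜] [FiniteDimensional k 𝒜] {F : 𝒜 →ₗ[k] k}
    (hF : ∀ x : 𝒜, (∀ y : 𝒜, F (x * y) = 0) → x = 0)
    {ι : Type*} [Fintype ι] [DecidableEq ι] {b : Module.Basis ι k 𝒜} {bd : ι → 𝒜}
    (hbd : ∀ i j, F (b i * bd j) = if i = j then 1 else 0) :
    IsUnit (∑ i, b i * bd i) ↔ (traceForm k 𝒜).SeparatingLeft := by
  have htrace := trace_eq_apply_mul_sum_mul_dual hbd
  set E := ∑ i, b i * bd i
  have : IsArtinianRing 𝒜 := isArtinian_of_tower k inferInstance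
  constructor
  · intro hE x hx
    obtain ⟨v, hEv⟩ := hE.exists_right_inv
    refine hF x fun z => ?_
    have hxzv := hx (z * v)
    rwa [traceForm_apply, htrace,
      show x * (z * v) * E = x * z by linear_combination (x * z) * hEv] at hxzv
  · intro h
    refine IsArtinianRing.isUnit_iff_mem_nonZeroDivisors.2 <|
      mem_nonZeroDivisors_iff_right.2 fun x hx => h x fun y => ?_
    rw [traceForm_apply, htrace, mul_right_comm, hx, zero_mul, map_zero]

theorem Algebra.trace_pi_apply {k ι : Type*} [CommRing k] [Fintype ι] (z : ι → k) :
    trace k (ι → k) z = ∑ j, z j := by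
  classical
  simp [trace_eq_matrix_trace (Pi.basisFun k ι), Matrix.trace, leftMulMatrix_eq_repr_mul]

theorem Algebra.traceForm_pi_separatingLeft {k ι : Type*} [CommRing k] [Fintype ι] :
    (traceForm k (ι → k)).SeparatingLeft := by
  classical
  intro x hx
  funext j
  simpa [trace_pi_apply, Pi.single_apply] using hx (Pi.single j 1)

theorem Algebra.traceForm_separatingLeft_of_algEquiv {R A B : Type*} [CommRing R] [CommRing A]
    [CommRing B] [Algebra R A] [Algebra R B] (e : A ≃ₐ[R] B) (h : (traceForm R B).SeparatingLeft) :
    (traceForm R A).SeparatingLeft := by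
  intro x hx
  have hex : e x = 0 := h (e x) fun y => by
    simpa [← trace_eq_of_algEquiv e] using hx (e.symm y)
  simpa using hex

theorem Algebra.isReduced_of_traceForm_separatingLeft {R A : Type*} [CommRing R] [IsReduced R]
    [CommRing A] [Algebra R A] [Module.Free R A] [Module.Finite R A]
    (h : (traceForm R A).SeparatingLeft) : IsReduced A := by
  refine ⟨fun x ⟨n, hn⟩ => h x fun y => ?_⟩
  have : IsNilpotent (lmul R A (x * y)) := ⟨n, by rw [← map_pow, mul_pow, hn, zero_mul, map_zero]⟩
  exact (LinearMap.isNilpotent_trace_of_isNilpotent this).eq_zero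

theorem exists_algEquiv_fin_pi_of_isReduced {k A : Type*} [Field k] [IsAlgClosed k] [CommRing A]
    [Algebra k A] [FiniteDimensional k A] [IsReduced A] :
    ∃ m : ℕ, Nonempty (A ≃ₐ[k] (Fin m → k)) := by
  have : IsArtinianRing A := isArtinian_of_tower k inferInstance
  let (I : MaximalSpectrum A) : Field (A ⧸ I.asIdeal) := Ideal.Quotient.field I.asIdeal
  have residue (I : MaximalSpectrum A) : k ≃ₐ[k] A ⧸ I.asIdeal :=
    AlgEquiv.ofBijective (Algebra.ofId k _) (IsAlgClosed.algebraMap_bijective_of_isIntegral)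
  exact ⟨Nat.card (MaximalSpectrum A), ⟨((IsArtinianRing.equivPi A).restrictScalars k).trans <|
    (AlgEquiv.piCongrRight residue).symm.trans <|
    AlgEquiv.piCongrLeft' k (fun _ => k) (Finite.equivFin _)⟩⟩

theorem stmt_14_general {k 𝒜 : Type*} [Field k] [IsAlgClosed k]
    [CommRing 𝒜] [Algebra k 𝒜] [FiniteDimensional k 𝒜]
    (F : 𝒜 →ₗ[k] k)
    (hF : ∀ x : 𝒜, (∀ y : 𝒜, F (x * y) = 0) → x = 0)
    {ι : Type*} [Fintype ι] [DecidableEq ι]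
    (b : Module.Basis ι k 𝒜) (bd : ι → 𝒜)
    (hbd : ∀ i j, F (b i * bd j) = if i = j then 1 else 0) :
    (∃ m : ℕ, Nonempty (𝒜 ≃ₐ[k] (Fin m → k))) ↔ IsUnit (∑ i, b i * bd i) := by
  rw [isUnit_sum_mul_dual_iff_traceForm_separatingLeft hF hbd]
  constructor
  · rintro ⟨m, ⟨e⟩⟩
    exact traceForm_separatingLeft_of_algEquiv e traceForm_pi_separatingLeft
  · intro h
    have := isReduced_of_traceForm_separatingLeft h
    exact exists_algEquiv_fin_pi_of_isReduced

/-- A finite-dimensional commutative Frobenius algebra over an algebraically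
closed field of characteristic 0 is semi-simple (a finite product of copies of
the field) if and only if its Euler class `Σᵢ aᵢ aᵢ⸌` is invertible. -/
theorem stmt_14 {k 𝒜 : Type*} [Field k] [IsAlgClosed k] [CharZero k]
    [CommRing 𝒜] [Algebra k 𝒜] [FiniteDimensional k 𝒜]
    (F : 𝒜 →ₗ[k] k)
    (hF : ∀ x : 𝒜, (∀ y : 𝒜, F (x * y) = 0) → x = 0)
    {ι : Type*} [Fintype ι] [DecidableEq ι]
    (b : Module.Basis ι k 𝒜) (bd : ι → 𝒜)
    (hbd : ∀ i j, F (b i * bd j) = if i = j then 1 else 0) :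
    (∃ m : ℕ, Nonempty (𝒜 ≃ₐ[k] (Fin m → k))) ↔ IsUnit (∑ i, b i * bd i) :=
  stmt_14_general F hF b bd hbd
end
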